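/- There is a bijection between the set of equivalence classes of irreducible representations of a finite n-ary group (G,f) and the set of equivalence classes of irreducible representations of its Post cover G*_a, given by Λ ↦ Λ*. In particular, a finite n-ary group has only finitely many irreducible representations up to equivalence. -/

import Mathlib

/-- An `n`-ary (polyadic) group: a set `G` with an `n`-ary operation `f`
(encoded on lists; only values on lists of length `n` are relevant) which is
associative and uniquely solvable in every position. -/
structure PolyadicGroup (n : ℕ) (G : Type*) where
  f : List G → G
  assoc : ∀ u v w u' v' w' : List G,
    v.length = n → v'.length = n →
    u.length + w.length = n - 1 → u'.length + w'.length = n - 1 →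
    u ++ v ++ w = u' ++ v' ++ w' →
    f (u ++ f v :: w) = f (u' ++ f v' :: w')
  solv : ∀ (u w : List G) (b : G), u.length + w.length = n - 1 →
    ∃! z : G, f (u ++ z :: w) = b

/-- The skew element `x̄` of `x`: the unique `z` with `f(x,...,x,z) = x`
(`x` repeated `n-1` times). -/
noncomputable def PolyadicGroup.skew {n : ℕ} {G : Type*} (P : PolyadicGroup n G)
    (x : G) : G :=
  (P.solv (List.replicate (n - 1) x) [] x (by simp)).choose

/-- `f_*`: apply `f` once (length `n`) or twice (length `2n-1`). -/
def PolyadicGroup.fstar {n : ℕ} {G : Type*} (P : PolyadicGroup n G)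
    (l : List G) : G :=
  if l.length = n then P.f l else P.f (P.f (l.take n) :: l.drop n)

/-- The Post cover multiplication on `G × ℤ_{n-1}`:
`(x,i)·(y,j) = (f_*(x, a^(i), y, a^(j), ā, a^(n-2-i*j)), i*j)` with
`i*j ≡ i+j+1 (mod n-1)`. -/
noncomputable def postMul {n : ℕ} {G : Type*} (P : PolyadicGroup n G) (a : G)
    (p q : G × ZMod (n - 1)) : G × ZMod (n - 1) :=
  (P.fstar (p.1 :: (List.replicate p.2.val a ++ q.1 ::
      (List.replicate q.2.val a ++ P.skew a ::
        List.replicate (n - 2 - (p.2 + q.2 + 1).val) a))),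
    p.2 + q.2 + 1)

/-- A degree-`m` representation of the n-ary group `(G, f)`:
`Λ(f(x_1,...,x_n)) = Λ(x_1)⋯Λ(x_n)`. -/
def IsNaryRep {n : ℕ} {G : Type*} (P : PolyadicGroup n G) {m : ℕ}
    (Λ : G → Matrix.GeneralLinearGroup (Fin m) ℂ) : Prop :=
  ∀ l : List G, l.length = n → Λ (P.f l) = (l.map Λ).prod

/-- A set of invertible matrices acts irreducibly on `ℂ^m`:
no invariant subspace other than `⊥` and `⊤`. -/
def IsIrredSet {m : ℕ} (T : Set (Matrix.GeneralLinearGroup (Fin m) ℂ)) : Prop :=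
  ∀ W : Submodule ℂ (Fin m → ℂ),
    (∀ g ∈ T, ∀ v ∈ W, Matrix.mulVec (g : Matrix (Fin m) (Fin m) ℂ) v ∈ W) →
    W = ⊥ ∨ W = ⊤

/-- `Λ* : G*_a → GL_m(ℂ)`, `Λ*(x,i) = Λ(x)Λ(a)^i`. -/
noncomputable def starRep (n : ℕ) {G : Type*} {m : ℕ} (a : G)
    (Λ : G → Matrix.GeneralLinearGroup (Fin m) ℂ) :
    G × ZMod (n - 1) → Matrix.GeneralLinearGroup (Fin m) ℂ :=
  fun p => Λ p.1 * (Λ a) ^ p.2.val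

/-- Equivalence of (possibly different-degree) representations: conjugacy by
a fixed invertible matrix. -/
def RepEquiv {X : Type*}
    (Λ Λ' : Σ m : ℕ, X → Matrix.GeneralLinearGroup (Fin m) ℂ) : Prop :=
  ∃ h : Λ'.1 = Λ.1, ∃ T : Matrix.GeneralLinearGroup (Fin Λ.1) ℂ,
    ∀ x : X, (h ▸ Λ'.2) x = T * Λ.2 x * T⁻¹

/-!
`Λ ↦ Λ*` sends irreducible representations of `(G, f)` to irreducible representations of the
Post cover and reflects equivalence, because `Λ*(x, 0) = Λ x` and the values of `Λ*` lie in the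
monoid generated by those of `Λ`. It is onto: the neutral sequences `a^(i) ā a^(n-2-i)` give
`(x, i)·(a, 0) = (x, i+1)` and `(x, 0)·(y₁, 0)⋯(y_{n-1}, 0) = (f(x, y₁, …, y_{n-1}), 0)`, so every
representation `Γ` of the cover is `(x ↦ Γ(x, 0))*`.

Finiteness is proved on the cover, where left multiplications are injective. Averaging
`Γ₁(p) M Γ₂(p)⁻¹` over `p` produces intertwiners, so by Schur's lemma the characters of pairwise
inequivalent irreducible representations of positive degree are biorthogonal to the traces of
the inverses, hence linearly independent in the finite-dimensional space `G × ℤ_{n-1} → ℂ`.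
-/

open Matrix

abbrev MatRep (X : Type*) := Σ m : ℕ, X → Matrix.GeneralLinearGroup (Fin m) ℂ

namespace RepEquiv

variable {X : Type*}

theorem mk_iff {m : ℕ} {Γ Γ' : X → Matrix.GeneralLinearGroup (Fin m) ℂ} :
    RepEquiv ⟨m, Γ⟩ ⟨m, Γ'⟩ ↔ ∃ T, ∀ x, Γ' x = T * Γ x * T⁻¹ :=
  ⟨fun ⟨_, T, h⟩ => ⟨T, h⟩, fun ⟨T, h⟩ => ⟨rfl, T, h⟩⟩

theorem refl (Λ : MatRep X) : RepEquiv Λ Λ :=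
  mk_iff.2 ⟨1, fun x => by simp⟩

theorem symm {Λ Λ' : MatRep X} (h : RepEquiv Λ Λ') : RepEquiv Λ' Λ := by
  obtain ⟨m, Γ⟩ := Λ
  obtain ⟨m', Γ'⟩ := Λ'
  obtain rfl : m' = m := h.1
  obtain ⟨T, hT⟩ := mk_iff.1 h
  exact mk_iff.2 ⟨T⁻¹, fun x => by rw [hT x]; group⟩

theorem trans {Λ Λ' Λ'' : MatRep X} (h : RepEquiv Λ Λ') (h' : RepEquiv Λ' Λ'') :
    RepEquiv Λ Λ'' := by
  obtain ⟨m, Γ⟩ := Λ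
  obtain ⟨m', Γ'⟩ := Λ'
  obtain ⟨m'', Γ''⟩ := Λ''
  obtain rfl : m' = m := h.1
  obtain rfl : m'' = m' := h'.1
  obtain ⟨T, hT⟩ := mk_iff.1 h
  obtain ⟨T', hT'⟩ := mk_iff.1 h'
  exact mk_iff.2 ⟨T' * T, fun x => by rw [hT' x, hT x]; group⟩

theorem of_degree_eq_zero {Λ Λ' : MatRep X} (h : Λ.1 = 0) (h' : Λ'.1 = 0) : RepEquiv Λ Λ' := by
  obtain ⟨m, Γ⟩ := Λ
  obtain ⟨m', Γ'⟩ := Λ'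
  subst h h'
  exact mk_iff.2 ⟨1, fun x => Subsingleton.elim _ _⟩

end RepEquiv

section Classes

variable {X Y : Type*}

def repClass (Pr : MatRep X → Prop) (Λ : MatRep X) : Set (MatRep X) :=
  {Λ' | Pr Λ' ∧ RepEquiv Λ Λ'}

def repClasses (Pr : MatRep X → Prop) : Set (Set (MatRep X)) :=
  {C | ∃ Λ, Pr Λ ∧ C = repClass Pr Λ}

theorem repClass_eq_iff {Pr : MatRep X → Prop} {Λ Λ' : MatRep X} (h' : Pr Λ') :
    repClass Pr Λ = repClass Pr Λ' ↔ RepEquiv Λ Λ' := by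
  refine ⟨fun h => (h ▸ ⟨h', RepEquiv.refl Λ'⟩ : Λ' ∈ repClass Pr Λ).2, fun h => ?_⟩
  ext Λ''
  exact ⟨fun ⟨hp, he⟩ => ⟨hp, h.symm.trans he⟩, fun ⟨hp, he⟩ => ⟨hp, h.trans he⟩⟩

/-- The map on classes induced by `φ`, defined without choosing representatives. -/
def classMap (Qr : MatRep Y → Prop) (φ : MatRep X → MatRep Y) (C : Set (MatRep X)) :
    Set (MatRep Y) :=
  {Γ | Qr Γ ∧ ∃ Λ ∈ C, RepEquiv (φ Λ) Γ}

variable {Pr : MatRep X → Prop} {Qr : MatRep Y → Prop} {φ : MatRep X → MatRep Y}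

theorem classMap_repClass (hφ : ∀ Λ Λ', RepEquiv (φ Λ) (φ Λ') ↔ RepEquiv Λ Λ')
    {Λ : MatRep X} (hΛ : Pr Λ) : classMap Qr φ (repClass Pr Λ) = repClass Qr (φ Λ) := by
  ext Γ
  constructor
  · rintro ⟨hΓ, Λ', ⟨-, hΛ'⟩, hφΛ'⟩
    exact ⟨hΓ, ((hφ _ _).2 hΛ').trans hφΛ'⟩
  · rintro ⟨hΓ, hφΛ⟩
    exact ⟨hΓ, Λ, ⟨hΛ, RepEquiv.refl Λ⟩, hφΛ⟩

theorem bijOn_classMap (hmaps : Set.MapsTo φ {Λ | Pr Λ} {Γ | Qr Γ})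
    (hsurj : Set.SurjOn φ {Λ | Pr Λ} {Γ | Qr Γ})
    (hφ : ∀ Λ Λ', RepEquiv (φ Λ) (φ Λ') ↔ RepEquiv Λ Λ') :
    Set.BijOn (classMap Qr φ) (repClasses Pr) (repClasses Qr) := by
  refine ⟨?_, ?_, ?_⟩
  · rintro C ⟨Λ, hΛ, rfl⟩
    exact ⟨φ Λ, hmaps hΛ, classMap_repClass hφ hΛ⟩
  · rintro C ⟨Λ, hΛ, rfl⟩ C' ⟨Λ', hΛ', rfl⟩ h
    rw [classMap_repClass hφ hΛ, classMap_repClass hφ hΛ',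
      repClass_eq_iff (show Qr (φ Λ') from hmaps hΛ'), hφ] at h
    exact (repClass_eq_iff hΛ').2 h
  · rintro D ⟨Γ, hΓ, rfl⟩
    obtain ⟨Λ, hΛ, rfl⟩ := hsurj hΓ
    exact ⟨repClass Pr Λ, ⟨Λ, hΛ, rfl⟩, classMap_repClass hφ hΛ⟩

end Classes

theorem IsIrredSet.of_subset_closure {m : ℕ} {S T : Set (Matrix.GeneralLinearGroup (Fin m) ℂ)}
    (hT : IsIrredSet T) (hTS : T ⊆ Submonoid.closure S) : IsIrredSet S := by
  intro W hW
  refine hT W fun g hg => Submonoid.closure_induction (fun g hg => hW g hg) (by simp)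
    (fun g h _ _ hg hh v hv => ?_) (hTS hg)
  rw [Units.val_mul, ← mulVec_mulVec]
  exact hg _ (hh v hv)

def Intertwines {X : Type*} {m₁ m₂ : ℕ} (Γ₁ : X → Matrix.GeneralLinearGroup (Fin m₁) ℂ)
    (Γ₂ : X → Matrix.GeneralLinearGroup (Fin m₂) ℂ) (S : Matrix (Fin m₁) (Fin m₂) ℂ) : Prop :=
  ∀ x, (Γ₁ x : Matrix (Fin m₁) (Fin m₁) ℂ) * S = S * (Γ₂ x : Matrix (Fin m₂) (Fin m₂) ℂ)

section Schur

variable {X : Type*} {m₁ m₂ : ℕ}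
  {Γ₁ : X → Matrix.GeneralLinearGroup (Fin m₁) ℂ} {Γ₂ : X → Matrix.GeneralLinearGroup (Fin m₂) ℂ}
  {S : Matrix (Fin m₁) (Fin m₂) ℂ}

theorem intertwiner_eq_zero_or_bijective (hirr₁ : IsIrredSet (Set.range Γ₁))
    (hirr₂ : IsIrredSet (Set.range Γ₂)) (hS : Intertwines Γ₁ Γ₂ S) :
    S = 0 ∨ Function.Bijective S.mulVec := by
  have hzero : S = 0 ↔ S.mulVecLin = 0 := by
    rw [← Matrix.toLin'_apply', LinearEquiv.map_eq_zero_iff]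
  have hker_inv : ∀ g ∈ Set.range Γ₂, ∀ v ∈ LinearMap.ker S.mulVecLin,
      (g : Matrix _ _ ℂ) *ᵥ v ∈ LinearMap.ker S.mulVecLin := by
    rintro _ ⟨x, rfl⟩ v hv
    rw [LinearMap.mem_ker, mulVecLin_apply] at hv ⊢
    rw [mulVec_mulVec, ← hS x, ← mulVec_mulVec, hv, mulVec_zero]
  have hrange_inv : ∀ g ∈ Set.range Γ₁, ∀ v ∈ LinearMap.range S.mulVecLin,
      (g : Matrix _ _ ℂ) *ᵥ v ∈ LinearMap.range S.mulVecLin := by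
    rintro _ ⟨x, rfl⟩ _ ⟨v, rfl⟩
    exact ⟨(Γ₂ x : Matrix _ _ ℂ) *ᵥ v, by simp [mulVec_mulVec, hS x]⟩
  rcases hirr₂ _ hker_inv with hker | hker
  · rcases hirr₁ _ hrange_inv with hrange | hrange
    · exact .inl (hzero.2 (LinearMap.range_eq_bot.1 hrange))
    · exact .inr ⟨LinearMap.ker_eq_bot.1 hker, LinearMap.range_eq_top.1 hrange⟩
  · exact .inl (hzero.2 (LinearMap.ker_eq_top.1 hker))

theorem repEquiv_of_intertwiner (hirr₁ : IsIrredSet (Set.range Γ₁))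
    (hirr₂ : IsIrredSet (Set.range Γ₂)) (hS : Intertwines Γ₁ Γ₂ S)
    (hS0 : S ≠ 0) : RepEquiv ⟨m₁, Γ₁⟩ ⟨m₂, Γ₂⟩ := by
  have hbij := (intertwiner_eq_zero_or_bijective hirr₁ hirr₂ hS).resolve_left hS0
  obtain rfl : m₂ = m₁ := by
    simpa using (LinearEquiv.ofBijective S.mulVecLin hbij).finrank_eq
  obtain ⟨U, rfl⟩ := mulVec_injective_iff_isUnit.1 hbij.1
  refine RepEquiv.mk_iff.2 ⟨U⁻¹, fun x => ?_⟩
  have hU : Γ₁ x * U = U * Γ₂ x := Units.ext (hS x)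
  rw [inv_inv, mul_assoc, hU, ← mul_assoc, inv_mul_cancel, one_mul]

theorem intertwiner_eq_smul_one {m : ℕ} [NeZero m] {Γ : X → Matrix.GeneralLinearGroup (Fin m) ℂ}
    (hirr : IsIrredSet (Set.range Γ)) {T : Matrix (Fin m) (Fin m) ℂ}
    (hT : Intertwines Γ Γ T) : ∃ μ : ℂ, T = μ • 1 := by
  obtain ⟨μ, hμ⟩ := Module.End.exists_eigenvalue (Matrix.toLin' T)
  obtain ⟨v, hv⟩ := hμ.exists_hasEigenvector
  refine ⟨μ, sub_eq_zero.1 ((intertwiner_eq_zero_or_bijective hirr hirr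
    (S := T - μ • 1) fun x => by simp [mul_sub, sub_mul, hT x]).resolve_right fun hbij => ?_)⟩
  refine hv.2 (hbij.1 ?_)
  have := hv.apply_eq_smul
  simp_all [sub_mulVec, smul_mulVec]

end Schur

def IsMulRep {X : Type*} (mul : X → X → X) {m : ℕ}
    (Γ : X → Matrix.GeneralLinearGroup (Fin m) ℂ) : Prop :=
  ∀ p q, Γ (mul p q) = Γ p * Γ q

section Averaging

variable {X : Type*} [Fintype X] {mul : X → X → X} {m m₁ m₂ : ℕ}
  {Γ : X → Matrix.GeneralLinearGroup (Fin m) ℂ}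
  {Γ₁ : X → Matrix.GeneralLinearGroup (Fin m₁) ℂ} {Γ₂ : X → Matrix.GeneralLinearGroup (Fin m₂) ℂ}

def conjAverage (Γ₁ : X → Matrix.GeneralLinearGroup (Fin m₁) ℂ)
    (Γ₂ : X → Matrix.GeneralLinearGroup (Fin m₂) ℂ) (M : Matrix (Fin m₁) (Fin m₂) ℂ) :
    Matrix (Fin m₁) (Fin m₂) ℂ :=
  ∑ p, (Γ₁ p : Matrix (Fin m₁) (Fin m₁) ℂ) * M * (↑(Γ₂ p)⁻¹ : Matrix (Fin m₂) (Fin m₂) ℂ)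

theorem intertwines_conjAverage (hmul : ∀ q, Function.Injective (mul q))
    (hΓ₁ : IsMulRep mul Γ₁) (hΓ₂ : IsMulRep mul Γ₂) (M : Matrix (Fin m₁) (Fin m₂) ℂ) :
    Intertwines Γ₁ Γ₂ (conjAverage Γ₁ Γ₂ M) := by
  intro q
  rw [conjAverage, Matrix.mul_sum, Matrix.sum_mul]
  refine Fintype.sum_bijective (mul q) (Finite.injective_iff_bijective.1 (hmul q)) _ _ fun p => ?_
  simp [hΓ₁ q p, hΓ₂ q p, Matrix.mul_assoc]

theorem trace_conjAverage_self (M : Matrix (Fin m) (Fin m) ℂ) :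
    trace (conjAverage Γ Γ M) = Fintype.card X * trace M := by
  simp [conjAverage, trace_sum, trace_mul_cycle _ M]

theorem conjAverage_self_eq_smul_one [NeZero m] (hmul : ∀ q, Function.Injective (mul q))
    (hΓ : IsMulRep mul Γ) (hirr : IsIrredSet (Set.range Γ)) (M : Matrix (Fin m) (Fin m) ℂ) :
    conjAverage Γ Γ M = (Fintype.card X * trace M / m) • (1 : Matrix (Fin m) (Fin m) ℂ) := by
  obtain ⟨μ, hμ⟩ := intertwiner_eq_smul_one hirr (intertwines_conjAverage hmul hΓ hΓ M)
  have htrace := trace_conjAverage_self (Γ := Γ) M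
  rw [hμ, trace_smul, trace_one, Fintype.card_fin, smul_eq_mul] at htrace
  rw [hμ, ← htrace, mul_div_cancel_right₀ _ (NeZero.ne (m : ℂ))]

theorem trace_mul_trace_eq_sum_single (A : Matrix (Fin m₁) (Fin m₁) ℂ)
    (B : Matrix (Fin m₂) (Fin m₂) ℂ) :
    trace A * trace B = ∑ i : Fin m₁, ∑ j : Fin m₂, (A * single i j (1 : ℂ) * B) i j := by
  simp [trace, Finset.sum_mul_sum, mul_apply, single_apply, ite_and]

theorem sum_trace_mul_trace_inv_eq_sum_conjAverage :
    ∑ p, trace (Γ₁ p : Matrix (Fin m₁) (Fin m₁) ℂ) * trace (↑(Γ₂ p)⁻¹ : Matrix (Fin m₂) (Fin m₂) ℂ)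
      = ∑ i, ∑ j, conjAverage Γ₁ Γ₂ (single i j 1) i j := by
  simp only [trace_mul_trace_eq_sum_single, conjAverage, Matrix.sum_apply]
  rw [Finset.sum_comm]
  exact Finset.sum_congr rfl fun i _ => Finset.sum_comm

end Averaging

section Orthogonality

variable {X : Type*} [Fintype X] {mul : X → X → X} {m m₁ m₂ : ℕ}
  {Γ : X → Matrix.GeneralLinearGroup (Fin m) ℂ}
  {Γ₁ : X → Matrix.GeneralLinearGroup (Fin m₁) ℂ} {Γ₂ : X → Matrix.GeneralLinearGroup (Fin m₂) ℂ}

theorem sum_trace_mul_trace_inv_eq_zero (hmul : ∀ q, Function.Injective (mul q))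
    (hΓ₁ : IsMulRep mul Γ₁) (hΓ₂ : IsMulRep mul Γ₂) (hirr₁ : IsIrredSet (Set.range Γ₁))
    (hirr₂ : IsIrredSet (Set.range Γ₂)) (hne : ¬RepEquiv ⟨m₁, Γ₁⟩ ⟨m₂, Γ₂⟩) :
    ∑ p, trace (Γ₁ p : Matrix (Fin m₁) (Fin m₁) ℂ) * trace (↑(Γ₂ p)⁻¹ : Matrix (Fin m₂) (Fin m₂) ℂ)
      = 0 := by
  have hzero (M : Matrix (Fin m₁) (Fin m₂) ℂ) : conjAverage Γ₁ Γ₂ M = 0 := by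
    by_contra h
    exact hne (repEquiv_of_intertwiner hirr₁ hirr₂ (intertwines_conjAverage hmul hΓ₁ hΓ₂ M) h)
  rw [sum_trace_mul_trace_inv_eq_sum_conjAverage]
  simp [hzero]

theorem sum_trace_mul_trace_inv_self [NeZero m] (hmul : ∀ q, Function.Injective (mul q))
    (hΓ : IsMulRep mul Γ) (hirr : IsIrredSet (Set.range Γ)) :
    ∑ p, trace (Γ p : Matrix (Fin m) (Fin m) ℂ) * trace (↑(Γ p)⁻¹ : Matrix (Fin m) (Fin m) ℂ)
      = Fintype.card X := by
  rw [sum_trace_mul_trace_inv_eq_sum_conjAverage]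
  simp [conjAverage_self_eq_smul_one hmul hΓ hirr, one_apply,
    mul_div_cancel₀ _ (NeZero.ne (m : ℂ))]

end Orthogonality

theorem linearIndependent_of_dotProduct_eq_ite {ι K X : Type*} [Field K] [Fintype X]
    [DecidableEq ι] {v w : ι → X → K} {c : K} (hc : c ≠ 0)
    (h : ∀ i j, v i ⬝ᵥ w j = if i = j then c else 0) : LinearIndependent K v := by
  refine linearIndependent_iff'.2 fun s g hs i hi => ?_
  have := congrArg (· ⬝ᵥ w i) hs
  simp only [sum_dotProduct, smul_dotProduct, h, smul_eq_mul, mul_ite, mul_zero,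
    Finset.sum_ite_eq', if_pos hi, zero_dotProduct] at this
  exact (mul_eq_zero.1 this).resolve_right hc

section Finiteness

variable {X : Type*} {mul : X → X → X}

def IsIrredMulRep (mul : X → X → X) (Γ : MatRep X) : Prop :=
  IsMulRep mul Γ.2 ∧ IsIrredSet (Set.range Γ.2)

theorem finite_repClasses_of_degree_ne_zero [Fintype X] [Nonempty X]
    (hmul : ∀ q, Function.Injective (mul q)) :
    {C | ∃ Γ, (IsIrredMulRep mul Γ ∧ Γ.1 ≠ 0) ∧ C = repClass (IsIrredMulRep mul) Γ}.Finite := by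
  classical
  set S := {C | ∃ Γ, (IsIrredMulRep mul Γ ∧ Γ.1 ≠ 0) ∧ C = repClass (IsIrredMulRep mul) Γ}
  refine Set.finite_coe_iff.1 ?_
  choose rep hrep hclass using fun C : S => C.2
  have hbiorth (C D : S) :
      (fun p => trace ((rep C).2 p : Matrix (Fin (rep C).1) (Fin (rep C).1) ℂ)) ⬝ᵥ
        (fun p => trace (↑((rep D).2 p)⁻¹ : Matrix (Fin (rep D).1) (Fin (rep D).1) ℂ))
      = if C = D then (Fintype.card X : ℂ) else 0 := by
    split_ifs with hCD
    · subst hCD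
      have : NeZero (rep C).1 := ⟨(hrep C).2⟩
      exact sum_trace_mul_trace_inv_self hmul (hrep C).1.1 (hrep C).1.2
    · refine sum_trace_mul_trace_inv_eq_zero hmul (hrep C).1.1 (hrep D).1.1 (hrep C).1.2
        (hrep D).1.2 fun hequiv => hCD (Subtype.ext ?_)
      rw [hclass, hclass]
      exact (repClass_eq_iff (hrep D).1).2 hequiv
  exact (linearIndependent_of_dotProduct_eq_ite (Nat.cast_ne_zero.2 Fintype.card_ne_zero)
    hbiorth).finite

theorem finite_repClasses [Fintype X] [Nonempty X] (hmul : ∀ q, Function.Injective (mul q)) :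
    (repClasses (IsIrredMulRep mul)).Finite := by
  -- Degree-0 representations have zero character, so they are not covered by the
  -- orthogonality argument; they all form a single class.
  have hzero : {C | ∃ Γ, (IsIrredMulRep mul Γ ∧ Γ.1 = 0) ∧
      C = repClass (IsIrredMulRep mul) Γ}.Subsingleton := by
    rintro _ ⟨Γ, ⟨-, hΓ⟩, rfl⟩ _ ⟨Γ', ⟨hΓ', hΓ'0⟩, rfl⟩
    exact (repClass_eq_iff hΓ').2 (RepEquiv.of_degree_eq_zero hΓ hΓ'0)
  refine (hzero.finite.union (finite_repClasses_of_degree_ne_zero hmul)).subset ?_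
  rintro _ ⟨Γ, hΓ, rfl⟩
  by_cases h : Γ.1 = 0
  exacts [.inl ⟨Γ, ⟨hΓ, h⟩, rfl⟩, .inr ⟨Γ, ⟨hΓ, h⟩, rfl⟩]

end Finiteness

theorem List.replicate_append_cons_replicate {α : Type*} (x : α) (k l : ℕ) :
    List.replicate k x ++ x :: List.replicate l x = List.replicate (k + l + 1) x := by
  rw [Nat.add_assoc, List.replicate_add, List.replicate_succ]

theorem ZMod.val_add_add_one_eq_or {k : ℕ} [NeZero k] (i j : ZMod k) :
    (i + j + 1).val = i.val + j.val + 1 ∨ (i + j + 1).val + k = i.val + j.val + 1 := by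
  have hi := ZMod.val_lt i
  have hj := ZMod.val_lt j
  rw [ZMod.val_add, ZMod.val_add, ZMod.val_one_eq_one_mod, ← Nat.add_mod]
  rcases Nat.lt_or_ge (i.val + j.val + 1) k with h | h
  · exact .inl (Nat.mod_eq_of_lt h)
  · rw [Nat.mod_eq_sub_mod h, Nat.mod_eq_of_lt (by omega)]
    omega

namespace PolyadicGroup

variable {n : ℕ} {G : Type*} (P : PolyadicGroup n G)

theorem cancel {u w : List G} {z z' : G} (h : u.length + w.length = n - 1)
    (he : P.f (u ++ z :: w) = P.f (u ++ z' :: w)) : z = z' :=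
  (P.solv u w _ h).unique he rfl

theorem f_replicate_append_skew (a : G) :
    P.f (List.replicate (n - 1) a ++ [P.skew a]) = a :=
  (P.solv (List.replicate (n - 1) a) [] a (by simp)).choose_spec.1

theorem f_replicate_skew_replicate (hn : 2 ≤ n) (a : G) {i : ℕ} (hi : i ≤ n - 1) :
    P.f (List.replicate i a ++ P.skew a :: List.replicate (n - 1 - i) a) = a := by
  refine P.cancel (u := List.replicate (n - 1) a) (w := []) (by simp) ?_
  rw [P.assoc _ _ [] (List.replicate i a) (List.replicate (n - 1) a ++ [P.skew a])
      (List.replicate (n - 1 - i) a) (by simp; omega) (by simp; omega) (by simp) (by simp; omega)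
      (by simp only [List.append_assoc, List.cons_append, List.nil_append, List.append_nil]
          rw [← List.append_assoc, ← List.append_assoc, List.replicate_append_replicate,
            List.replicate_append_replicate, Nat.add_comm]),
    f_replicate_append_skew, List.replicate_append_cons_replicate, ← List.replicate_succ',
    show i + (n - 1 - i) + 1 = n - 1 + 1 by omega]

theorem f_cons_replicate_skew_replicate (hn : 2 ≤ n) (a : G) {i : ℕ} (hi : i ≤ n - 2) (x : G) :
    P.f (x :: (List.replicate i a ++ P.skew a :: List.replicate (n - 2 - i) a)) = x := by
  refine P.cancel (u := []) (w := List.replicate (n - 1) a) (by simp) ?_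
  rw [P.assoc [] _ _ [x] (List.replicate i a ++ P.skew a :: List.replicate (n - 1 - i) a)
      (List.replicate (n - 2) a) (by simp; omega) (by simp; omega) (by simp) (by simp; omega)
      (by simp [show n - 2 - i + (n - 1) = n - 1 - i + (n - 2) by omega]),
    P.f_replicate_skew_replicate hn a (by omega), List.singleton_append, List.nil_append,
    ← List.replicate_succ, show n - 2 + 1 = n - 1 by omega]

theorem f_skew_replicate_append (hn : 2 ≤ n) (a : G) (y : G) :
    P.f (P.skew a :: List.replicate (n - 2) a ++ [y]) = y := by
  refine P.cancel (u := List.replicate (n - 1) a) (w := []) (by simp) ?_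
  rw [P.assoc _ _ [] [] (List.replicate (n - 1) a ++ [P.skew a]) (List.replicate (n - 2) a ++ [y])
      (by simp; omega) (by simp; omega) (by simp) (by simp; omega) (by simp),
    f_replicate_append_skew, List.nil_append, ← List.cons_append, ← List.replicate_succ,
    show n - 2 + 1 = n - 1 by omega]

theorem fstar_of_length_eq {l : List G} (h : l.length = n) : P.fstar l = P.f l := if_pos h

theorem fstar_append (hn : 2 ≤ n) {u v : List G} (hu : u.length = n) (hv : v.length = n - 1) :
    P.fstar (u ++ v) = P.f (P.f u :: v) := by
  rw [fstar, if_neg (by simp; omega), List.take_left' hu, List.drop_left' hu]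

theorem fstar_cancel (hn : 2 ≤ n) {u w : List G} {z z' : G} (hu : u.length ≤ n - 1)
    (hlen : u.length + w.length + 1 = n ∨ u.length + w.length + 1 = 2 * n - 1)
    (h : P.fstar (u ++ z :: w) = P.fstar (u ++ z' :: w)) : z = z' := by
  rcases hlen with hl | hl
  · rw [P.fstar_of_length_eq (by simp; omega), P.fstar_of_length_eq (by simp; omega)] at h
    exact P.cancel (by omega) h
  · have hsplit (c : G) : u ++ c :: w
        = (u ++ c :: w.take (n - 1 - u.length)) ++ w.drop (n - 1 - u.length) := by
      simp
    rw [hsplit, hsplit, P.fstar_append hn (by simp; omega) (by simp; omega),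
      P.fstar_append hn (by simp; omega) (by simp; omega)] at h
    exact P.cancel (by simp; omega) (P.cancel (u := []) (by simp; omega) h)

end PolyadicGroup

section PostCover

variable {n : ℕ} {G : Type*} (P : PolyadicGroup n G) (a : G)

noncomputable def postWord (p q : G × ZMod (n - 1)) : List G :=
  p.1 :: (List.replicate p.2.val a ++ q.1 ::
    (List.replicate q.2.val a ++ P.skew a :: List.replicate (n - 2 - (p.2 + q.2 + 1).val) a))

theorem postMul_eq (p q : G × ZMod (n - 1)) :
    postMul P a p q = (P.fstar (postWord P a p q), p.2 + q.2 + 1) := rfl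

theorem length_postWord (hn : 2 ≤ n) (p q : G × ZMod (n - 1)) :
    (postWord P a p q).length = n ∨ (postWord P a p q).length = 2 * n - 1 := by
  have : NeZero (n - 1) := ⟨by omega⟩
  have := ZMod.val_lt (p.2 + q.2 + 1)
  rcases ZMod.val_add_add_one_eq_or p.2 q.2 with h | h <;> simp [postWord] <;> omega

theorem postMul_left_injective (hn : 2 ≤ n) (q : G × ZMod (n - 1)) :
    Function.Injective (postMul P a q) := by
  intro p p' h
  rw [postMul_eq, postMul_eq, Prod.mk.injEq] at h
  have hp2 : p.2 = p'.2 := by simpa using h.2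
  refine Prod.ext (P.fstar_cancel hn (u := q.1 :: List.replicate q.2.val a)
    (w := List.replicate p'.2.val a ++ P.skew a :: List.replicate (n - 2 - (q.2 + p'.2 + 1).val) a)
    ?_ ?_ ?_) hp2
  · have : NeZero (n - 1) := ⟨by omega⟩
    simpa using ZMod.val_lt q.2
  · have := length_postWord P a hn q p'
    simp only [postWord, List.length_cons, List.length_append, List.length_replicate] at this ⊢
    omega
  · simpa [postWord, hp2] using h.1

theorem postMul_zero_of_val_add_one_lt (hn : 2 ≤ n) {i : ZMod (n - 1)} (hi : i.val + 1 < n - 1)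
    (x y : G) : postMul P a (x, i) (y, 0) =
      (P.f (x :: (List.replicate i.val a ++ y :: P.skew a :: List.replicate (n - 3 - i.val) a)),
        i + 1) := by
  have : NeZero (n - 1) := ⟨by omega⟩
  have hk : (i + 1).val = i.val + 1 := by
    have := ZMod.val_add_add_one_eq_or i 0
    simp only [add_zero, ZMod.val_zero] at this
    omega
  rw [postMul_eq, P.fstar_of_length_eq (by simp [postWord, hk]; omega)]
  simp [postWord, hk, show n - 2 - (i.val + 1) = n - 3 - i.val by omega]

theorem postMul_zero_of_val_eq (hn : 2 ≤ n) {i : ZMod (n - 1)} (hi : i.val = n - 2) (x y : G) :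
    postMul P a (x, i) (y, 0) = (P.f (x :: (List.replicate (n - 2) a ++ [y])), 0) := by
  have : NeZero (n - 1) := ⟨by omega⟩
  have hk : i + 1 = 0 := by
    rw [← ZMod.natCast_zmod_val i, hi, ← Nat.cast_add_one, show n - 2 + 1 = n - 1 by omega,
      ZMod.natCast_self]
  have hsplit : postWord P a (x, i) (y, 0)
      = (x :: (List.replicate (n - 2) a ++ [y])) ++ P.skew a :: List.replicate (n - 2) a := by
    simp [postWord, hk, hi]
  rw [postMul_eq, hsplit, P.fstar_append hn (by simp; omega) (by simp; omega), add_zero, hk]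
  simpa using P.f_cons_replicate_skew_replicate hn a (i := 0) (by omega) _

theorem postMul_a_zero (hn : 2 ≤ n) {i : ZMod (n - 1)} (hi : i.val + 1 < n - 1) (x : G) :
    postMul P a (x, i) (a, 0) = (x, i + 1) := by
  rw [postMul_zero_of_val_add_one_lt P a hn hi, List.append_cons, ← List.replicate_succ',
    show n - 3 - i.val = n - 2 - (i.val + 1) by omega,
    P.f_cons_replicate_skew_replicate hn a (by omega)]

/-- `(x,0)·(t₁,0)·…·(tₖ,0)` in the Post cover, for `k ≤ n - 2`. -/
noncomputable def partialProd (x : G) (t : List G) : G × ZMod (n - 1) :=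
  (P.f (x :: t ++ P.skew a :: List.replicate (n - 2 - t.length) a), t.length)

theorem partialProd_nil (hn : 2 ≤ n) (x : G) : partialProd P a x [] = (x, 0) := by
  simpa [partialProd] using P.f_cons_replicate_skew_replicate hn a (i := 0) (by omega) x

theorem postMul_partialProd (hn : 2 ≤ n) (x y : G) {t : List G} (ht : t.length + 1 ≤ n - 2) :
    postMul P a (partialProd P a x t) (y, 0) = partialProd P a x (t ++ [y]) := by
  have : NeZero (n - 1) := ⟨by omega⟩
  have hval : (t.length : ZMod (n - 1)).val = t.length := ZMod.val_natCast_of_lt (by omega)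
  rw [partialProd, postMul_zero_of_val_add_one_lt P a hn (by omega), partialProd]
  simp only [hval, List.length_append, List.length_singleton, Nat.cast_add, Nat.cast_one,
    Prod.mk.injEq, and_true]
  rw [← List.nil_append (_ :: _), P.assoc [] _ _ (x :: t)
      (P.skew a :: List.replicate (n - 2) a ++ [y])
      (P.skew a :: List.replicate (n - 3 - t.length) a)
      (by simp; omega) (by simp; omega) (by simp; omega) (by simp; omega)
      (by simp only [List.cons_append, List.append_assoc, List.nil_append]
          rw [← List.append_assoc (List.replicate _ a), List.replicate_append_replicate,
            Nat.sub_add_cancel (by omega)]),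
    P.f_skew_replicate_append hn]
  simp [show n - 2 - (t.length + 1) = n - 3 - t.length by omega]

theorem postMul_partialProd_of_length_eq (hn : 2 ≤ n) (x y : G) {t : List G}
    (ht : t.length = n - 2) :
    postMul P a (partialProd P a x t) (y, 0) = (P.f (x :: (t ++ [y])), 0) := by
  have : NeZero (n - 1) := ⟨by omega⟩
  rw [partialProd, postMul_zero_of_val_eq P a hn (by rw [ZMod.val_natCast_of_lt (by omega), ht])]
  rw [← List.nil_append (_ :: _), P.assoc [] _ _ (x :: t)
      (P.skew a :: List.replicate (n - 2) a ++ [y]) []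
      (by simp; omega) (by simp; omega) (by simp; omega) (by simp; omega) (by simp [ht]),
    P.f_skew_replicate_append hn]
  simp

end PostCover

namespace IsNaryRep

variable {n : ℕ} {G : Type*} {P : PolyadicGroup n G} {m : ℕ}
  {Λ : G → Matrix.GeneralLinearGroup (Fin m) ℂ}

theorem map_fstar (hΛ : IsNaryRep P Λ) {l : List G} (h : l.length = n ∨ l.length = 2 * n - 1) :
    Λ (P.fstar l) = (l.map Λ).prod := by
  unfold PolyadicGroup.fstar
  split_ifs with hl
  · exact hΛ l hl
  · rw [hΛ _ (by simp; omega), List.map_cons, List.prod_cons, hΛ _ (by simp; omega),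
      ← List.prod_append, ← List.map_append, List.take_append_drop]

theorem map_skew_mul_pow (hΛ : IsNaryRep P Λ) (hn : 2 ≤ n) (a : G) :
    Λ (P.skew a) * Λ a ^ (n - 2) = 1 := by
  have h := hΛ (List.replicate (n - 1) a ++ [P.skew a]) (by simp; omega)
  rw [P.f_replicate_append_skew] at h
  simp only [List.map_append, List.map_replicate, List.prod_append, List.prod_replicate,
    List.map_cons, List.map_nil, List.prod_cons, List.prod_nil, mul_one] at h
  refine mul_left_cancel (a := Λ a ^ (n - 1)) ?_
  rw [← mul_assoc, ← h, ← pow_succ', mul_one, show n - 2 + 1 = n - 1 by omega]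

theorem isMulRep_starRep (hΛ : IsNaryRep P Λ) (hn : 2 ≤ n) (a : G) :
    IsMulRep (postMul P a) (starRep n a Λ) := by
  intro p q
  have : NeZero (n - 1) := ⟨by omega⟩
  have := ZMod.val_lt (p.2 + q.2 + 1)
  simp only [starRep, postMul_eq]
  rw [hΛ.map_fstar (length_postWord P a hn p q)]
  simp only [postWord, List.map_cons, List.map_append, List.map_replicate, List.prod_cons,
    List.prod_append, List.prod_replicate, mul_assoc]
  rw [← pow_add, Nat.sub_add_cancel (by omega), hΛ.map_skew_mul_pow hn, mul_one]

end IsNaryRep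

namespace IsMulRep

variable {n : ℕ} {G : Type*} {P : PolyadicGroup n G} {a : G} {m : ℕ}
  {Γ : G × ZMod (n - 1) → Matrix.GeneralLinearGroup (Fin m) ℂ}

theorem map_partialProd (hΓ : IsMulRep (postMul P a) Γ) (hn : 2 ≤ n) (x : G) {t : List G}
    (ht : t.length ≤ n - 2) :
    Γ (partialProd P a x t) = Γ (x, 0) * (t.map fun y => Γ (y, 0)).prod := by
  induction t using List.reverseRecOn with
  | nil => simp [partialProd_nil P a hn]
  | append_singleton t y ih =>
    simp only [List.length_append, List.length_singleton] at ht
    rw [← postMul_partialProd P a hn x y (by omega), hΓ, ih (by omega)]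
    simp [mul_assoc]

theorem isNaryRep (hΓ : IsMulRep (postMul P a) Γ) (hn : 2 ≤ n) :
    IsNaryRep P fun x => Γ (x, 0) := by
  rintro (_ | ⟨x, r⟩) hl
  · simp at hl
    omega
  obtain ⟨t, y, rfl⟩ := r.eq_nil_or_concat'.resolve_left (by rintro rfl; simp at hl; omega)
  simp only [List.length_cons, List.length_append, List.length_nil] at hl
  show Γ (P.f (x :: (t ++ [y])), 0) = _
  rw [← postMul_partialProd_of_length_eq P a hn x y (by omega), hΓ,
    hΓ.map_partialProd hn x (by omega)]
  simp [mul_assoc]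

theorem apply_natCast (hΓ : IsMulRep (postMul P a) Γ) (hn : 2 ≤ n) (x : G) {j : ℕ}
    (hj : j ≤ n - 2) : Γ (x, (j : ZMod (n - 1))) = Γ (x, 0) * Γ (a, 0) ^ j := by
  have : NeZero (n - 1) := ⟨by omega⟩
  induction j with
  | zero => simp
  | succ j ih =>
    have hval : (j : ZMod (n - 1)).val = j := ZMod.val_natCast_of_lt (by omega)
    rw [Nat.cast_succ, ← postMul_a_zero P a hn (by omega), hΓ, ih (by omega), pow_succ, mul_assoc]

theorem starRep_eq (hΓ : IsMulRep (postMul P a) Γ) (hn : 2 ≤ n) :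
    starRep n a (fun x => Γ (x, 0)) = Γ := by
  have : NeZero (n - 1) := ⟨by omega⟩
  funext p
  rw [starRep, ← hΓ.apply_natCast hn p.1 (by have := ZMod.val_lt p.2; omega),
    ZMod.natCast_zmod_val]

end IsMulRep

section StarMap

variable {n : ℕ} {G : Type*} {m : ℕ} (a : G)

theorem starRep_zero (Λ : G → Matrix.GeneralLinearGroup (Fin m) ℂ) (x : G) :
    starRep n a Λ (x, 0) = Λ x := by
  simp [starRep]

theorem isIrredSet_range_starRep_iff {Λ : G → Matrix.GeneralLinearGroup (Fin m) ℂ} :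
    IsIrredSet (Set.range (starRep n a Λ)) ↔ IsIrredSet (Set.range Λ) := by
  refine ⟨fun h => h.of_subset_closure ?_, fun h => h.of_subset_closure ?_⟩
  · rintro _ ⟨p, rfl⟩
    exact mul_mem (Submonoid.subset_closure (Set.mem_range_self p.1))
      (pow_mem (Submonoid.subset_closure (Set.mem_range_self a)) _)
  · rintro _ ⟨x, rfl⟩
    exact Submonoid.subset_closure ⟨(x, 0), starRep_zero a Λ x⟩

noncomputable def starMap (n : ℕ) (a : G) (Λ : MatRep G) : MatRep (G × ZMod (n - 1)) :=
  ⟨Λ.1, starRep n a Λ.2⟩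

theorem repEquiv_starMap_iff (Λ Λ' : MatRep G) :
    RepEquiv (starMap n a Λ) (starMap n a Λ') ↔ RepEquiv Λ Λ' := by
  obtain ⟨m, Λ⟩ := Λ
  obtain ⟨m', Λ'⟩ := Λ'
  refine ⟨fun h => ?_, fun h => ?_⟩ <;> obtain rfl : m' = m := h.1
  · obtain ⟨T, hT⟩ := RepEquiv.mk_iff.1 h
    exact RepEquiv.mk_iff.2 ⟨T, fun x => by simpa [starRep_zero] using hT (x, 0)⟩
  · obtain ⟨T, hT⟩ := RepEquiv.mk_iff.1 h
    exact RepEquiv.mk_iff.2 ⟨T, fun p => by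
      simp only [starRep]
      rw [hT, hT, conj_pow]
      group⟩

end StarMap

section StarClasses

variable {n : ℕ} {G : Type*} (P : PolyadicGroup n G) (a : G)

def IsIrredNaryRep (Λ : MatRep G) : Prop :=
  IsNaryRep P Λ.2 ∧ IsIrredSet (Set.range Λ.2)

theorem mapsTo_starMap (hn : 2 ≤ n) :
    Set.MapsTo (starMap n a) {Λ | IsIrredNaryRep P Λ} {Γ | IsIrredMulRep (postMul P a) Γ} :=
  fun _ ⟨hΛ, hirr⟩ => ⟨hΛ.isMulRep_starRep hn a, (isIrredSet_range_starRep_iff a).2 hirr⟩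

theorem surjOn_starMap (hn : 2 ≤ n) :
    Set.SurjOn (starMap n a) {Λ | IsIrredNaryRep P Λ} {Γ | IsIrredMulRep (postMul P a) Γ} := by
  rintro ⟨m, Γ⟩ ⟨hΓ, hirr⟩
  have hstar := hΓ.starRep_eq hn
  refine ⟨⟨m, fun x => Γ (x, 0)⟩, ⟨hΓ.isNaryRep hn, ?_⟩, by rw [starMap, hstar]⟩
  rw [← isIrredSet_range_starRep_iff a, hstar]
  exact hirr

end StarClasses

/-- There is a bijection, induced by `Λ ↦ Λ*`, between equivalence classes of
irreducible representations of a finite n-ary group `(G,f)` and of its Post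
cover `G*_a`; in particular there are only finitely many classes. -/
theorem irr_classes_bijection {n : ℕ} {G : Type*} [Finite G] (hn : 2 ≤ n)
    (P : PolyadicGroup n G) (a : G) :
    ∃ F : Set (Σ m : ℕ, G → Matrix.GeneralLinearGroup (Fin m) ℂ) →
          Set (Σ m : ℕ, (G × ZMod (n - 1)) → Matrix.GeneralLinearGroup (Fin m) ℂ),
      Set.BijOn F
        {C | ∃ Λ, (IsNaryRep P Λ.2 ∧ IsIrredSet (Set.range Λ.2)) ∧
          C = {Λ' | (IsNaryRep P Λ'.2 ∧ IsIrredSet (Set.range Λ'.2)) ∧ RepEquiv Λ Λ'}}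
        {D | ∃ Γ, ((∀ p q, Γ.2 (postMul P a p q) = Γ.2 p * Γ.2 q) ∧
            IsIrredSet (Set.range Γ.2)) ∧
          D = {Γ' | ((∀ p q, Γ'.2 (postMul P a p q) = Γ'.2 p * Γ'.2 q) ∧
            IsIrredSet (Set.range Γ'.2)) ∧ RepEquiv Γ Γ'}} ∧
      (∀ Λ : Σ m : ℕ, G → Matrix.GeneralLinearGroup (Fin m) ℂ,
        IsNaryRep P Λ.2 → IsIrredSet (Set.range Λ.2) →
        F {Λ' | (IsNaryRep P Λ'.2 ∧ IsIrredSet (Set.range Λ'.2)) ∧ RepEquiv Λ Λ'}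
          = {Γ' | ((∀ p q, Γ'.2 (postMul P a p q) = Γ'.2 p * Γ'.2 q) ∧
              IsIrredSet (Set.range Γ'.2)) ∧
              RepEquiv ⟨Λ.1, starRep n a Λ.2⟩ Γ'}) ∧
      Set.Finite
        {C | ∃ Λ, (IsNaryRep P Λ.2 ∧ IsIrredSet (Set.range Λ.2)) ∧
          C = {Λ' | (IsNaryRep P Λ'.2 ∧ IsIrredSet (Set.range Λ'.2)) ∧ RepEquiv Λ Λ'}} := by
  have : Fintype G := Fintype.ofFinite G
  have : NeZero (n - 1) := ⟨by omega⟩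
  have hbij : Set.BijOn (classMap (IsIrredMulRep (postMul P a)) (starMap n a))
      (repClasses (IsIrredNaryRep P)) (repClasses (IsIrredMulRep (postMul P a))) :=
    bijOn_classMap (mapsTo_starMap P a hn) (surjOn_starMap P a hn) (repEquiv_starMap_iff a)
  have : Nonempty (G × ZMod (n - 1)) := ⟨(a, 0)⟩
  exact ⟨_, hbij, fun Λ hΛ hirr => classMap_repClass (repEquiv_starMap_iff a) ⟨hΛ, hirr⟩,
    hbij.finite_iff_finite.2 (finite_repClasses (postMul_left_injective P a hn))⟩
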